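/- arXiv:1901.05382 — 3 statements merged into one kernel-verified Lean document; each statement's English description precedes it below -/
import Mathlib

section
/- Let x, r, w, p be integers with gcd(x,r)=1, p an odd prime, x(x^2+6r^2) = 5^(p-1) * w^p, 5 ∣ x, and x odd and not divisible by 3. Then there exist integers w1, w2 with x = 5^(p-1) * w1^p and x^2 + 6r^2 = w2^p. -/
/-!
Since `x` is prime to `6r`, it is prime to `x² + 6r²`; since `5 ∣ x` and `5 ∤ 6r`, so is `5`.
Hence `5^(p-1)` divides `x`, and in the coprime factorization `(x / 5^(p-1)) · (x² + 6r²) = w^p`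
both factors are `p`-th powers because `p` is odd.
-/

theorem IsCoprime.sq_add_mul_sq {R : Type*} [CommRing R] {x r c : R}
    (hxr : IsCoprime x r) (hxc : IsCoprime x c) : IsCoprime x (x ^ 2 + c * r ^ 2) := by
  convert (hxc.mul_right (hxr.pow_right (n := 2))).add_mul_left_right x using 1
  ring

theorem IsCoprime.sq_add_mul_sq_of_dvd {R : Type*} [CommRing R] {q x r c : R}
    (hqx : q ∣ x) (hxr : IsCoprime x r) (hqc : IsCoprime q c) :
    IsCoprime q (x ^ 2 + c * r ^ 2) := by
  obtain ⟨k, rfl⟩ := hqx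
  convert (hqc.mul_right (hxr.of_mul_left_left.pow_right (n := 2))).add_mul_left_right
    (k * (q * k)) using 1
  ring

theorem Int.exists_eq_mul_pow_of_mul_eq_mul_pow_odd {a b m c : ℤ} {k : ℕ}
    (hab : IsCoprime a b) (hmb : IsCoprime m b) (hm : m ≠ 0) (hk : Odd k)
    (h : a * b = m * c ^ k) : ∃ d e : ℤ, a = m * d ^ k ∧ b = e ^ k := by
  obtain ⟨a', rfl⟩ : m ∣ a := hmb.dvd_of_dvd_mul_right ⟨c ^ k, h⟩
  have h' : a' * b = c ^ k := mul_left_cancel₀ hm (by rw [← h, mul_assoc])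
  obtain ⟨⟨d, rfl⟩, e, rfl⟩ := Int.eq_pow_of_mul_eq_pow_odd hab.of_mul_left_right hk h'
  exact ⟨d, e, rfl, rfl⟩

theorem case_one_descent_general (x r w : ℤ) (p : ℕ) (hodd : Odd p)
    (hcop : Int.gcd x r = 1)
    (h : x * (x^2 + 6*r^2) = 5^(p-1) * w^p)
    (h5 : (5 : ℤ) ∣ x) (hx2 : Odd x) (hx3 : ¬ (3 : ℤ) ∣ x) :
    ∃ w1 w2 : ℤ, x = 5^(p-1) * w1^p ∧ x^2 + 6*r^2 = w2^p := by
  have hxr : IsCoprime x r := Int.isCoprime_iff_gcd_eq_one.mpr hcop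
  have hx6 : IsCoprime x 6 := by
    have hx3' : IsCoprime x 3 := (Int.prime_three.coprime_iff_not_dvd.mpr hx3).symm
    simpa using (Int.isCoprime_two_right.mpr hx2).mul_right hx3'
  have h5coprime : IsCoprime (5 : ℤ) (x ^ 2 + 6 * r ^ 2) :=
    IsCoprime.sq_add_mul_sq_of_dvd h5 hxr (by norm_num [Int.isCoprime_iff_gcd_eq_one])
  exact Int.exists_eq_mul_pow_of_mul_eq_mul_pow_odd (hxr.sq_add_mul_sq hx6) h5coprime.pow_left
    (by positivity) hodd h

theorem case_one_descent (x r w : ℤ) (p : ℕ) (hp : p.Prime) (hodd : Odd p)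
    (hcop : Int.gcd x r = 1)
    (h : x * (x^2 + 6*r^2) = 5^(p-1) * w^p)
    (h5 : (5 : ℤ) ∣ x) (hx2 : Odd x) (hx3 : ¬ (3 : ℤ) ∣ x) :
    ∃ w1 w2 : ℤ, x = 5^(p-1) * w1^p ∧ x^2 + 6*r^2 = w2^p :=
  case_one_descent_general x r w p hodd hcop h h5 hx2 hx3
end

section
/- Let p ≥ 3 be a prime, and a, b, c positive integers with gcd(a,b,c)=1. Let q = 2kp + 1 be a prime not dividing a. If there are no ζ in F_q with ζ = η^(2p) for some η in F_q such that ((b·ζ + c)/a)^(2k) ∈ {0, 1} in F_q, then the equation a·w2^p − b·w1^(2p) = c has no integer solutions (w1, w2). -/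
theorem sophie_germain_criterion (p k q : ℕ) [Fact q.Prime]
    (hp : p.Prime) (hp3 : 3 ≤ p) (hq : q = 2*k*p + 1)
    (a b c : ℤ) (ha : 0 < a) (hb : 0 < b) (hc : 0 < c)
    (hgcd : Int.gcd (Int.gcd a b) c = 1)
    (hqa : ¬ ((q : ℤ) ∣ a))
    (hB : ¬ ∃ η : ZMod q,
        (((b : ZMod q) * η^(2*p) + (c : ZMod q)) / (a : ZMod q))^(2*k) = 0 ∨
        (((b : ZMod q) * η^(2*p) + (c : ZMod q)) / (a : ZMod q))^(2*k) = 1) :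
    ¬ ∃ w1 w2 : ℤ, a * w2^p - b * w1^(2*p) = c := by
  rintro ⟨w1, w2, hw⟩
  apply hB
  refine ⟨(w1 : ZMod q), ?_⟩
  have hk : 0 < k := by
    rcases Nat.eq_zero_or_pos k with hk0 | hk0
    · exfalso
      have := (Fact.out : q.Prime)
      rw [hq, hk0] at this
      simp at this
      exact Nat.not_prime_one this
    · exact hk0
  have haz : (a : ZMod q) ≠ 0 := by
    rwa [Ne, ZMod.intCast_zmod_eq_zero_iff_dvd]
  have hcast : (a : ZMod q) * (w2 : ZMod q)^p - (b : ZMod q) * (w1 : ZMod q)^(2*p)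
      = (c : ZMod q) := by
    exact_mod_cast congrArg (Int.cast : ℤ → ZMod q) hw
  have hsum : (b : ZMod q) * (w1 : ZMod q)^(2*p) + (c : ZMod q)
      = (a : ZMod q) * (w2 : ZMod q)^p := by
    rw [← hcast]; ring
  rw [hsum, mul_div_cancel_left₀ _ haz]
  rcases eq_or_ne ((w2 : ZMod q)) 0 with h0 | h0
  · left
    rw [h0, ← pow_mul]
    exact zero_pow (by positivity)
  · right
    rw [← pow_mul]
    have : p * (2 * k) = q - 1 := by rw [hq, Nat.add_sub_cancel]; ring
    rw [this]
    exact ZMod.pow_card_sub_one_eq_one h0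
end

section
/- Let K = Q(√−6) with ring of integers O_K, let p be an odd prime, and suppose x, w1, w2 are nonzero coprime integers with x = 30^(p−1)·w1^p and x^2 + 6 = 6·w2^p. Let γ = u + v√−6 ∈ O_K generate the principal ideal p2·p3·ζ where (x+√−6)O_K = p2·p3·ζ^p, p2 = (2,√−6), p3 = (3,√−6), so that x + √−6 = γ^p / 6^((p−1)/2). Set α = γ/√6 and β = γ̄/√6 in L = Q(i, √6). Then α and β are algebraic integers, (α+β)^2 and αβ are nonzero coprime rational integers, and α/β is not a root of unity. -/
/-!
Write `γ = u + v√-6` in `ℤ[√-6]` and `p = 2e + 1`, so that `γ ^ p = 6ᵉ x + 6ᵉ √-6`. Taking norms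
gives `u² + 6v² = 6 w₂`, hence `6 ∣ u`; with `u = 6t` we get `α = t√6 + vi`, `β = t√6 - vi`, so
`(α + β)² = 24t²` and `αβ = 6t² + v² = w₂`. Here `t ≠ 0` because an odd power of a multiple of
`√-6` has real part `0`, whereas `6ᵉ x ≠ 0`. From `x² + 6 = 6 w₂ᵖ` we get `6 ∣ x` and
`w₂ᵖ ≡ 1 mod 6`, so `w₂` is prime to `6`; a common divisor `d` of `t` and `v` divides `γ`, so
`dᵖ ∣ 6ᵉ` while `d ∣ w₂`, which forces `d` to be a unit. Hence `24t²` and `w₂` are coprime.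
Finally, if `ζ = α / β` were a root of unity then `(α + β)² / αβ = (ζ + 1)(ζ⁻¹ + 1)` would be a
rational algebraic integer, so `w₂ ∣ 24t²`, i.e. `w₂ = ±1`, contradicting `w₂ = 6t² + v² ≥ 6`.
-/

open Complex

theorem Int.dvd_of_isIntegral_intCast_div {K : Type*} [Field K] [CharZero K] {m n : ℤ}
    (hn : n ≠ 0) (h : IsIntegral ℤ ((m : K) / n)) : n ∣ m := by
  have hq : IsIntegral ℤ ((m : ℚ) / n) := by
    rw [← isIntegral_algebraMap_iff (algebraMap ℚ K).injective]
    simpa using h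
  obtain ⟨k, hk⟩ := IsIntegrallyClosed.isIntegral_iff.mp hq
  refine ⟨k, ?_⟩
  rw [eq_div_iff (by exact_mod_cast hn)] at hk
  exact_mod_cast (mul_comm (k : ℚ) n ▸ hk).symm

theorem not_exists_pow_div_eq_one_of_isCoprime {K : Type*} [Field K] [CharZero K] {α β : K}
    {m n : ℤ} (hm : (α + β) ^ 2 = m) (hn : α * β = n) (hcop : IsCoprime m n)
    (hunit : ¬ IsUnit n) : ¬ ∃ k : ℕ, 0 < k ∧ (α / β) ^ k = 1 := by
  rintro ⟨k, hk, hζ⟩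
  have hζ0 : α / β ≠ 0 := by rintro h; simp [h, hk.ne'] at hζ
  have hβ : β ≠ 0 := by rintro rfl; simp at hζ0
  have hα : α ≠ 0 := by rintro rfl; simp at hζ0
  have hn0 : n ≠ 0 := by rintro rfl; simp [hα, hβ] at hn
  have hint : IsIntegral ℤ ((m : K) / n) := by
    have hζint : IsIntegral ℤ (α / β) := IsIntegral.of_pow hk (hζ ▸ isIntegral_one)
    have hζinv : IsIntegral ℤ (α / β)⁻¹ :=
      IsIntegral.of_pow hk (by rw [inv_pow, hζ, inv_one]; exact isIntegral_one)
    have hmn : (m : K) / n = (α / β + 1) * ((α / β)⁻¹ + 1) := by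
      rw [← hm, ← hn]
      field_simp
      ring
    exact hmn ▸ (hζint.add isIntegral_one).mul (hζinv.add isIntegral_one)
  exact hunit (hcop.isUnit_of_dvd' (Int.dvd_of_isIntegral_intCast_div hn0 hint) dvd_rfl)

theorem Complex.ofReal_sqrt_natCast_sq (n : ℕ) : ((√n : ℝ) : ℂ) ^ 2 = n := by
  rw [← ofReal_pow, Real.sq_sqrt n.cast_nonneg, ofReal_natCast]

theorem Complex.isIntegral_ofReal_sqrt_natCast (n : ℕ) : IsIntegral ℤ ((√n : ℝ) : ℂ) :=
  IsIntegral.of_pow two_pos ((ofReal_sqrt_natCast_sq n).symm ▸ isIntegral_natCast n)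

theorem Complex.isIntegral_I : IsIntegral ℤ I :=
  IsIntegral.of_pow two_pos (by rw [I_sq]; exact isIntegral_one.neg)

theorem Complex.isIntegral_intCast_mul_sqrt_add_intCast_mul_I (n : ℕ) (a b : ℤ) :
    IsIntegral ℤ ((a : ℂ) * (√n : ℝ) + b * I) :=
  ((isIntegral_intCast a).mul (isIntegral_ofReal_sqrt_natCast n)).add
    ((isIntegral_intCast b).mul isIntegral_I)

theorem Zsqrtd.re_pow_eq_zero_of_re_eq_zero {d : ℤ} {z : ℤ√d} (hz : z.re = 0) {n : ℕ}
    (hn : Odd n) : (z ^ n).re = 0 := by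
  have hstar : star z = -z := by ext <;> simp [hz]
  have h : (star (z ^ n)).re = (-(z ^ n)).re := by rw [star_pow, hstar, hn.neg_pow]
  simp only [Zsqrtd.re_star, Zsqrtd.re_neg] at h
  omega

theorem six_dvd_of_six_dvd_sq {x : ℤ} (h : 6 ∣ x ^ 2) : 6 ∣ x := by
  have h6 : Squarefree (6 : ℕ) := by
    rw [show (6 : ℕ) = 2 * 3 from rfl, Nat.squarefree_mul (by norm_num)]
    exact ⟨Nat.prime_two.squarefree, Nat.prime_three.squarefree⟩
  exact ((Int.squarefree_natCast.mpr h6).dvd_pow_iff_dvd two_ne_zero).1 h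

theorem isCoprime_six_of_sq_add_six_eq {x y : ℤ} (h : x ^ 2 + 6 = 6 * y) : IsCoprime 6 y := by
  obtain ⟨k, rfl⟩ := six_dvd_of_six_dvd_sq (x := x) ⟨y - 1, by linarith⟩
  exact ⟨-k ^ 2, 1, by linarith⟩

noncomputable def sqrtNegSixToComplex : ℤ√(-6) →+* ℂ :=
  Zsqrtd.lift ⟨I * √6, by
    push_cast
    linear_combination (I ^ 2) * ofReal_sqrt_natCast_sq 6 + 6 * I_sq⟩

theorem sqrtNegSixToComplex_mk (a b : ℤ) :
    sqrtNegSixToComplex ⟨a, b⟩ = a + b * (I * √6) := rfl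

theorem sqrtNegSixToComplex_injective : Function.Injective sqrtNegSixToComplex :=
  Zsqrtd.lift_injective _ fun n hn => by nlinarith [mul_self_nonneg n]

theorem div_sqrt_six (a b : ℂ) : (6 * a + b * (I * √6)) / √6 = a * √6 + b * I := by
  have hs : (√6 : ℂ) ^ 2 = 6 := by exact_mod_cast ofReal_sqrt_natCast_sq 6
  have hs0 : (√6 : ℂ) ≠ 0 := by rintro h; simp [h] at hs
  rw [div_eq_iff hs0]
  linear_combination (-a) * hs

theorem mul_sqrt_six_add_mul_I_add_sub_sq (a b : ℂ) :
    (a * √6 + b * I + (a * √6 - b * I)) ^ 2 = 24 * a ^ 2 := by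
  linear_combination 4 * a ^ 2 * (by exact_mod_cast ofReal_sqrt_natCast_sq 6 : (√6 : ℂ) ^ 2 = 6)

theorem mul_sqrt_six_add_mul_I_mul_sub (a b : ℂ) :
    (a * √6 + b * I) * (a * √6 - b * I) = 6 * a ^ 2 + b ^ 2 := by
  linear_combination a ^ 2 * (by exact_mod_cast ofReal_sqrt_natCast_sq 6 : (√6 : ℂ) ^ 2 = 6) -
    b ^ 2 * I_sq

theorem mk_pow_eq_of_complex {u v x : ℤ} {e : ℕ}
    (h : (x : ℂ) + I * √6 = ((u : ℂ) + v * (I * √6)) ^ (2 * e + 1) / 6 ^ e) :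
    (⟨u, v⟩ : ℤ√(-6)) ^ (2 * e + 1) = ⟨x * 6 ^ e, 6 ^ e⟩ := by
  apply sqrtNegSixToComplex_injective
  rw [map_pow, sqrtNegSixToComplex_mk, sqrtNegSixToComplex_mk, ← (eq_div_iff (by simp)).1 h]
  push_cast
  ring

section PowEq

variable {γ : ℤ√(-6)} {x : ℤ} {e : ℕ} (hγ : γ ^ (2 * e + 1) = ⟨x * 6 ^ e, 6 ^ e⟩)
include hγ

theorem re_sq_add_six_mul_im_sq_eq {w : ℤ} (heq : x ^ 2 + 6 = 6 * w ^ (2 * e + 1)) :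
    γ.re ^ 2 + 6 * γ.im ^ 2 = 6 * w := by
  have h := congrArg Zsqrtd.norm hγ
  rw [show (γ ^ (2 * e + 1)).norm = γ.norm ^ (2 * e + 1) from map_pow Zsqrtd.normMonoidHom _ _,
    Zsqrtd.norm_def, Zsqrtd.norm_def] at h
  apply (odd_two_mul_add_one e).strictMono_pow.injective
  linear_combination h + (6 ^ e * 6 ^ e) * heq

theorem re_ne_zero_of_pow_eq (hx : x ≠ 0) : γ.re ≠ 0 := by
  intro h0
  have h := congrArg Zsqrtd.re hγ
  rw [Zsqrtd.re_pow_eq_zero_of_re_eq_zero h0 (odd_two_mul_add_one e)] at h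
  exact hx (by simpa using h.symm)

theorem pow_dvd_six_pow_of_dvd {d : ℤ} (hre : d ∣ γ.re) (him : d ∣ γ.im) :
    d ^ (2 * e + 1) ∣ 6 ^ e := by
  have h : ((d ^ (2 * e + 1) : ℤ) : ℤ√(-6)) ∣ γ ^ (2 * e + 1) := by
    rw [Int.cast_pow]
    exact pow_dvd_pow_of_dvd ((Zsqrtd.intCast_dvd d γ).2 ⟨hre, him⟩) _
  rw [hγ, Zsqrtd.intCast_dvd] at h
  exact h.2

theorem isCoprime_of_pow_eq {t : ℤ} (hre : γ.re = 6 * t)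
    (hw : IsCoprime 6 (6 * t ^ 2 + γ.im ^ 2)) : IsCoprime t γ.im := by
  rw [← isRelPrime_iff_isCoprime]
  intro d hdt hdv
  have hd : d ^ (2 * e + 1) ∣ 6 ^ e := pow_dvd_six_pow_of_dvd hγ (hre ▸ hdt.mul_left 6) hdv
  have hdw : IsCoprime d (6 * t ^ 2 + γ.im ^ 2) :=
    (IsCoprime.pow_left_iff (2 * e).succ_pos).1 (hw.pow_left.of_isCoprime_of_dvd_left hd)
  exact hdw.isUnit_of_dvd' dvd_rfl
    (dvd_add ((dvd_pow hdt two_ne_zero).mul_left 6) (dvd_pow hdv two_ne_zero))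

end PowEq

theorem isCoprime_twentyFour_mul_sq {t v : ℤ} (h6 : IsCoprime 6 (6 * t ^ 2 + v ^ 2))
    (htv : IsCoprime t v) : IsCoprime (24 * t ^ 2) (6 * t ^ 2 + v ^ 2) := by
  refine IsCoprime.mul_left ((h6.pow_left (m := 3)).of_isCoprime_of_dvd_left (by norm_num)) ?_
  have ht : IsCoprime t (v ^ 2 + t * (6 * t)) := htv.pow_right.add_mul_left_right _
  exact IsCoprime.pow_left (by convert ht using 1; ring)

theorem not_isUnit_six_mul_sq_add_sq {t : ℤ} (ht : t ≠ 0) (v : ℤ) :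
    ¬ IsUnit (6 * t ^ 2 + v ^ 2) := by
  have : 0 < t ^ 2 := by positivity
  rintro h
  rcases Int.isUnit_iff.1 h with h | h <;> nlinarith [sq_nonneg v]

open Complex in
theorem lehmer_pair_lemma_general (p : ℕ) (hodd : Odd p)
    (x w2 : ℤ) (hx : x ≠ 0)
    (heq : x^2 + 6 = 6 * w2^p)
    (u v : ℤ) (γ α β : ℂ)
    (hγ : γ = (u : ℂ) + (v : ℂ) * (Complex.I * Real.sqrt 6))
    (hprin : (x : ℂ) + Complex.I * Real.sqrt 6 = γ^p / (6 : ℂ)^((p-1)/2))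
    (hα : α = γ / Real.sqrt 6)
    (hβ : β = ((u : ℂ) - (v : ℂ) * (Complex.I * Real.sqrt 6)) / Real.sqrt 6) :
    IsIntegral ℤ α ∧ IsIntegral ℤ β ∧
    (∃ m n : ℤ, (α + β)^2 = (m : ℂ) ∧ α * β = (n : ℂ) ∧
      m ≠ 0 ∧ n ≠ 0 ∧ IsCoprime m n) ∧
    ¬ ∃ n : ℕ, 0 < n ∧ (α / β)^n = 1 := by
  obtain ⟨e, rfl⟩ := hodd
  have hkey : (⟨u, v⟩ : ℤ√(-6)) ^ (2 * e + 1) = ⟨x * 6 ^ e, 6 ^ e⟩ :=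
    mk_pow_eq_of_complex (by simpa [hγ] using hprin)
  have hnorm : u ^ 2 + 6 * v ^ 2 = 6 * w2 := re_sq_add_six_mul_im_sq_eq hkey heq
  obtain ⟨t, rfl⟩ : 6 ∣ u := six_dvd_of_six_dvd_sq ⟨w2 - v ^ 2, by linarith⟩
  obtain rfl : w2 = 6 * t ^ 2 + v ^ 2 := by linarith
  have ht : t ≠ 0 := by rintro rfl; exact re_ne_zero_of_pow_eq hkey hx (by simp)
  have h6 := (IsCoprime.pow_right_iff (2 * e).succ_pos).1 (isCoprime_six_of_sq_add_six_eq heq)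
  have hcop := isCoprime_twentyFour_mul_sq h6 (isCoprime_of_pow_eq hkey rfl h6)
  have hα' : α = t * √6 + v * I := by
    rw [hα, hγ]; push_cast; linear_combination div_sqrt_six t v
  have hβ' : β = t * √6 - v * I := by
    rw [hβ]; push_cast; linear_combination div_sqrt_six t (-v)
  have hm : (α + β) ^ 2 = ((24 * t ^ 2 : ℤ) : ℂ) := by
    rw [hα', hβ', mul_sqrt_six_add_mul_I_add_sub_sq]; push_cast; ring
  have hn : α * β = ((6 * t ^ 2 + v ^ 2 : ℤ) : ℂ) := by
    rw [hα', hβ', mul_sqrt_six_add_mul_I_mul_sub]; push_cast; ring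
  refine ⟨hα' ▸ isIntegral_intCast_mul_sqrt_add_intCast_mul_I 6 t v, hβ' ▸ ?_,
    ⟨_, _, hm, hn, by positivity, by positivity, hcop⟩,
    not_exists_pow_div_eq_one_of_isCoprime hm hn hcop (not_isUnit_six_mul_sq_add_sq ht v)⟩
  simpa [sub_eq_add_neg] using isIntegral_intCast_mul_sqrt_add_intCast_mul_I 6 t (-v)

open Complex in
theorem lehmer_pair_lemma (p : ℕ) (hp : p.Prime) (hodd : Odd p)
    (x w1 w2 : ℤ) (hx : x ≠ 0) (hw1 : w1 ≠ 0) (hw2 : w2 ≠ 0)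
    (hcop : Int.gcd w1 w2 = 1)
    (hxe : x = 30^(p-1) * w1^p)
    (heq : x^2 + 6 = 6 * w2^p)
    (u v : ℤ) (γ α β : ℂ)
    (hγ : γ = (u : ℂ) + (v : ℂ) * (Complex.I * Real.sqrt 6))
    (hprin : (x : ℂ) + Complex.I * Real.sqrt 6 = γ^p / (6 : ℂ)^((p-1)/2))
    (hα : α = γ / Real.sqrt 6)
    (hβ : β = ((u : ℂ) - (v : ℂ) * (Complex.I * Real.sqrt 6)) / Real.sqrt 6) :
    IsIntegral ℤ α ∧ IsIntegral ℤ β ∧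
    (∃ m n : ℤ, (α + β)^2 = (m : ℂ) ∧ α * β = (n : ℂ) ∧
      m ≠ 0 ∧ n ≠ 0 ∧ IsCoprime m n) ∧
    ¬ ∃ n : ℕ, 0 < n ∧ (α / β)^n = 1 :=
  lehmer_pair_lemma_general p hodd x w2 hx heq u v γ α β hγ hprin hα hβ
end
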